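/- arXiv:1402.3177 — 5 statements merged into one kernel-verified Lean document; each statement's English description precedes it below -/
import Mathlib

section
/- Let Q ⊆ ℝ^n be a cube and v_k : Q → ℂ^d measurable with |v_k(x)| = 1 a.e. for each k. If |(1/|Q|)∫_Q v_k| → 1 as k → ∞, then there exist a unit vector u_0 ∈ ℂ^d, a subsequence (v_{k_j}), and a full-measure subset F ⊆ Q such that v_{k_j}(x) → u_0 for every x ∈ F. -/
/-!
The averages `⨍ v_k` lie in the closed unit ball, so along a subsequence they converge to some
`u₀`, a unit vector because their norms tend to `1`. Since `v_k` and `u₀` are unit vectors,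
`⨍ ‖v_k - u₀‖² = 2 - 2 Re ⟪u₀, ⨍ v_k⟫`, which tends to `0` along that subsequence. Convergence
in `L²` implies convergence in measure, hence a.e. convergence along a further subsequence.
-/

open MeasureTheory Filter

/-- The closed axis-parallel cube of lower corner `a` and side `ℓ` in `ℝ^n`. -/
def cube {n : ℕ} (a : Fin n → ℝ) (ℓ : ℝ) : Set (Fin n → ℝ) :=
  Set.Icc a (a + fun _ => ℓ)

open Topology ProbabilityTheory
open scoped InnerProductSpace

section

variable {α E : Type*} [MeasurableSpace α] {μ : Measure α} [NormedAddCommGroup E]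

theorem exists_subset_measure_diff_eq_zero_of_ae_restrict {s : Set α} (hs : MeasurableSet s)
    {p : α → Prop} (h : ∀ᵐ x ∂μ.restrict s, p x) :
    ∃ F ⊆ s, μ (s \ F) = 0 ∧ ∀ x ∈ F, p x := by
  refine ⟨{x | x ∈ s ∧ p x}, fun x hx => hx.1, ?_, fun x hx => hx.2⟩
  rw [ae_restrict_iff' hs, ae_iff] at h
  convert h using 2
  ext x
  simp

theorem tendstoInMeasure_of_tendsto_integral_norm_sub_sq {ι : Type*} {l : Filter ι}
    {f : ι → α → E} {g : α → E} (hf : ∀ i, AEStronglyMeasurable (f i) μ)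
    (hg : AEStronglyMeasurable g μ) (hfg : ∀ i, MemLp (f i - g) 2 μ)
    (h : Tendsto (fun i => ∫ x, ‖f i x - g x‖ ^ 2 ∂μ) l (𝓝 0)) : TendstoInMeasure μ f l g := by
  refine tendstoInMeasure_of_tendsto_eLpNorm two_ne_zero hf hg ?_
  have heq : ∀ i, eLpNorm (f i - g) 2 μ =
      ENNReal.ofReal ((∫ x, ‖f i x - g x‖ ^ 2 ∂μ) ^ (2⁻¹ : ℝ)) := fun i => by
    simpa using (hfg i).eLpNorm_eq_integral_rpow_norm two_ne_zero ENNReal.ofNat_ne_top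
  simp_rw [heq]
  have hsqrt := (Real.continuousAt_rpow_const 0 2⁻¹ (by norm_num)).tendsto.comp h
  simpa [Function.comp_def] using (ENNReal.continuous_ofReal.tendsto _).comp hsqrt

variable [InnerProductSpace ℝ E]

theorem integral_norm_sub_sq_eq_two_sub_inner_integral [CompleteSpace E] [IsProbabilityMeasure μ]
    {f : α → E} (hf : Integrable f μ) (hnorm : ∀ᵐ x ∂μ, ‖f x‖ = 1) {u : E} (hu : ‖u‖ = 1) :
    ∫ x, ‖f x - u‖ ^ 2 ∂μ = 2 - 2 * ⟪u, ∫ x, f x ∂μ⟫_ℝ := by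
  have hpt : ∀ᵐ x ∂μ, ‖f x - u‖ ^ 2 = 2 - 2 * ⟪u, f x⟫_ℝ := hnorm.mono fun x hx => by
    rw [norm_sub_sq_real, hx, hu, real_inner_comm]; ring
  rw [integral_congr_ae hpt, integral_sub (integrable_const _) ((hf.const_inner u).const_mul 2),
    integral_const_mul, integral_inner hf]
  simp

theorem exists_subseq_ae_tendsto_of_tendsto_norm_integral [IsProbabilityMeasure μ] [ProperSpace E]
    {v : ℕ → α → E} (hv : ∀ k, AEStronglyMeasurable (v k) μ)
    (hnorm : ∀ k, ∀ᵐ x ∂μ, ‖v k x‖ = 1)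
    (hlim : Tendsto (fun k => ‖∫ x, v k x ∂μ‖) atTop (𝓝 1)) :
    ∃ u₀ : E, ‖u₀‖ = 1 ∧ ∃ φ : ℕ → ℕ, StrictMono φ ∧
      ∀ᵐ x ∂μ, Tendsto (fun j => v (φ j) x) atTop (𝓝 u₀) := by
  have hle : ∀ k, ∀ᵐ x ∂μ, ‖v k x‖ ≤ 1 := fun k => (hnorm k).mono fun x hx => hx.le
  have hball : ∀ k, ∫ x, v k x ∂μ ∈ Metric.closedBall (0 : E) 1 := fun k => by
    simpa using norm_integral_le_of_norm_le_const (hle k)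
  obtain ⟨u₀, -, φ, hφ, hconv⟩ := (isCompact_closedBall (0 : E) 1).tendsto_subseq hball
  have hu₀ : ‖u₀‖ = 1 := tendsto_nhds_unique hconv.norm (hlim.comp hφ.tendsto_atTop)
  have hL2 : Tendsto (fun j => ∫ x, ‖v (φ j) x - u₀‖ ^ 2 ∂μ) atTop (𝓝 0) := by
    have hinner : Tendsto (fun j => ⟪u₀, ∫ x, v (φ j) x ∂μ⟫_ℝ) atTop (𝓝 1) := by
      simpa [real_inner_self_eq_norm_sq, hu₀] using
        (tendsto_const_nhds (x := u₀)).inner (𝕜 := ℝ) hconv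
    have hint : ∀ k, Integrable (v k) μ := fun k => (integrable_const (1 : ℝ)).mono' (hv k) (hle k)
    simp_rw [integral_norm_sub_sq_eq_two_sub_inner_integral (hint _) (hnorm _) hu₀]
    simpa using (hinner.const_mul 2).const_sub 2
  have hmeas : TendstoInMeasure μ (fun j => v (φ j)) atTop (fun _ => u₀) :=
    tendstoInMeasure_of_tendsto_integral_norm_sub_sq (fun j => hv _) aestronglyMeasurable_const
      (fun j => (MemLp.of_bound (hv _) 1 (hle _)).sub (memLp_const u₀)) hL2
  obtain ⟨ψ, hψ, hae⟩ := hmeas.exists_seq_tendsto_ae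
  exact ⟨u₀, hu₀, φ ∘ ψ, hφ.comp hψ, hae⟩

end

theorem volume_cube {n : ℕ} (a : Fin n → ℝ) (ℓ : ℝ) : volume (cube a ℓ) = ENNReal.ofReal ℓ ^ n := by
  simp [cube, Real.volume_Icc_pi]

/-- If `v_k` are measurable unit-norm functions on a cube `Q` whose averages have norms
tending to `1`, then some subsequence converges a.e. on `Q` to a fixed unit vector `u₀`. -/
theorem stmt8 {n d : ℕ} (a : Fin n → ℝ) (ℓ : ℝ) (hℓ : 0 < ℓ)
    (Q : Set (Fin n → ℝ)) (hQ : Q = cube a ℓ)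
    (v : ℕ → (Fin n → ℝ) → EuclideanSpace ℂ (Fin d))
    (hv : ∀ k, AEStronglyMeasurable (v k) (volume.restrict Q))
    (hnorm : ∀ k, ∀ᵐ x ∂volume.restrict Q, ‖v k x‖ = 1)
    (hlim : Tendsto (fun k => ‖(volume Q).toReal⁻¹ • ∫ z in Q, v k z‖) atTop (nhds 1)) :
    ∃ (u₀ : EuclideanSpace ℂ (Fin d)) (φ : ℕ → ℕ) (F : Set (Fin n → ℝ)),
      ‖u₀‖ = 1 ∧ StrictMono φ ∧ F ⊆ Q ∧ volume (Q \ F) = 0 ∧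
        ∀ x ∈ F, Tendsto (fun j => v (φ j) x) atTop (nhds u₀) := by
  let _ := InnerProductSpace.rclikeToReal ℂ (EuclideanSpace ℂ (Fin d))
  have hQm : MeasurableSet Q := hQ ▸ measurableSet_Icc
  have hQ0 : volume Q ≠ 0 := by simp [hQ, volume_cube, hℓ]
  have hQtop : volume Q ≠ ⊤ := by simp [hQ, volume_cube]
  have := cond_isProbabilityMeasure_of_finite hQ0 hQtop
  have hint (k : ℕ) : ∫ x, v k x ∂volume[|Q] = (volume Q).toReal⁻¹ • ∫ z in Q, v k z := by
    simp [ProbabilityTheory.cond, integral_smul_measure]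
  obtain ⟨u₀, hu₀, φ, hφ, hconv⟩ :=
    exists_subseq_ae_tendsto_of_tendsto_norm_integral (μ := volume[|Q])
      (fun k => (hv k).smul_measure _) (fun k => Measure.smul_absolutelyContinuous.ae_le (hnorm k))
      (hlim.congr fun k => (congrArg norm (hint k)).symm)
  obtain ⟨F, hFQ, hnull, hF⟩ := exists_subset_measure_diff_eq_zero_of_ae_restrict hQm
    ((Measure.absolutelyContinuous_smul (ENNReal.inv_ne_zero.2 hQtop)).ae_le hconv)
  exact ⟨u₀, φ, F, hu₀, hφ, hFQ, hnull, hF⟩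
end

section
/- Let S_1, …, S_N be nontrivial linear subspaces of ℂ^d with ∩_{j=1}^N S_j = {0}. Then there exists δ > 0 such that for every j and every v ∈ S_j there exists k ≠ j with |(v,w)| ≤ (1−δ)|v||w| for all w ∈ S_k. -/
/-!
Write `P_k` for the orthogonal projection onto `S_k`. For `w ∈ S_k` we have
`(v, w) = (P_k v, w)`, so it suffices to find `c < 1` such that every `v ∈ S_j` has some
`k ≠ j` with `|P_k v| ≤ c |v|`.
A unit vector `u ∈ S_j` lies in `S_j` but not in every `S_k`, so `|P_k u| < 1` for some `k ≠ j`.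
Hence `u ↦ min_{k ≠ j} |P_k u|` is a continuous function on the compact unit sphere of `S_j`
which is everywhere `< 1`, and its maximum is the required `c`.
-/

open Finset Metric Submodule

variable {𝕜 E ι : Type*} [RCLike 𝕜] [NormedAddCommGroup E] [InnerProductSpace 𝕜 E]

theorem Submodule.norm_inner_le_norm_starProjection_mul_norm (K : Submodule 𝕜 E)
    [K.HasOrthogonalProjection] (v : E) {w : E} (hw : w ∈ K) :
    ‖(inner 𝕜 v w : 𝕜)‖ ≤ ‖K.starProjection v‖ * ‖w‖ := by
  have h : (inner 𝕜 v w : 𝕜) = inner 𝕜 (K.starProjection v) w := by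
    rw [inner_starProjection_left_eq_right, starProjection_eq_self_iff.mpr hw]
  exact h ▸ norm_inner_le_norm _ _

theorem nontrivial_of_iInf_eq_bot {α : Type*} [CompleteLattice α] [Nonempty ι] {S : ι → α}
    (hne : ∀ i, S i ≠ ⊥) (hint : ⨅ i, S i = ⊥) : Nontrivial ι := by
  by_contra h
  rw [not_nontrivial_iff_subsingleton] at h
  obtain ⟨j⟩ := ‹Nonempty ι›
  refine hne j (le_antisymm ?_ bot_le)
  exact hint ▸ le_iInf fun k => by rw [Subsingleton.elim k j]

section Family

variable {S : ι → Submodule 𝕜 E}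

theorem exists_norm_starProjection_lt_norm_of_iInf_eq_bot
    [∀ i, (S i).HasOrthogonalProjection] (hint : ⨅ i, S i = ⊥) {v : E}
    (hv : v ≠ 0) : ∃ k, ‖(S k).starProjection v‖ < ‖v‖ := by
  have hv' : v ∉ ⨅ i, S i := by rwa [hint, mem_bot]
  obtain ⟨k, hk⟩ := not_forall.mp (mt (mem_iInf S).mpr hv')
  exact ⟨k, (norm_starProjection_apply_le _ v).lt_of_ne
    fun h => hk ((mem_iff_norm_starProjection _ v).mpr h)⟩

theorem exists_ne_norm_starProjection_le_mul_norm [∀ i, (S i).HasOrthogonalProjection]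
    [Nontrivial ι] {j : ι} {c : ℝ}
    (h : ∀ u ∈ S j, ‖u‖ = 1 → ∃ k ≠ j, ‖(S k).starProjection u‖ ≤ c) :
    ∀ v ∈ S j, ∃ k ≠ j, ‖(S k).starProjection v‖ ≤ c * ‖v‖ := by
  intro v hv
  rcases eq_or_ne v 0 with rfl | hv0
  · obtain ⟨k, hk⟩ := exists_ne j
    exact ⟨k, hk, by simp⟩
  have hnorm : ‖v‖ ≠ 0 := norm_ne_zero_iff.mpr hv0
  have hunit : ‖((‖v‖ : 𝕜)⁻¹ • v)‖ = 1 := by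
    rw [norm_smul, norm_inv, RCLike.norm_ofReal, abs_norm, inv_mul_cancel₀ hnorm]
  obtain ⟨k, hk, hle⟩ := h _ ((S j).smul_mem _ hv) hunit
  refine ⟨k, hk, ?_⟩
  rw [map_smul, norm_smul, norm_inv, RCLike.norm_ofReal, abs_norm, inv_mul_le_iff₀
    (norm_pos_iff.mpr hv0)] at hle
  linarith

theorem exists_lt_one_forall_norm_eq_one_exists_ne_norm_starProjection_le [FiniteDimensional 𝕜 E]
    [Fintype ι] [Nontrivial ι] (hint : ⨅ i, S i = ⊥) (j : ι) :
    ∃ c < 1, ∀ u ∈ S j, ‖u‖ = 1 → ∃ k ≠ j, ‖(S k).starProjection u‖ ≤ c := by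
  classical
  have := FiniteDimensional.proper_rclike 𝕜 E
  set K : Set E := (S j : Set E) ∩ sphere 0 1
  rcases K.eq_empty_or_nonempty with hK | hK
  · exact ⟨0, one_pos, fun u hu hu1 =>
      (Set.eq_empty_iff_forall_notMem.mp hK u ⟨hu, mem_sphere_zero_iff_norm.mpr hu1⟩).elim⟩
  have hF : (univ.erase j).Nonempty :=
    let ⟨k, hk⟩ := exists_ne j
    ⟨k, mem_erase.mpr ⟨hk, mem_univ k⟩⟩
  let f : E → ℝ := fun u => (univ.erase j).inf' hF fun k => ‖(S k).starProjection u‖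
  have hf : Continuous f :=
    Continuous.finset_inf'_apply hF fun k _ => continuous_norm.comp (S k).starProjection.continuous
  have hKc : IsCompact K := (isCompact_sphere 0 1).of_isClosed_subset
    ((S j).closed_of_finiteDimensional.inter isClosed_sphere) Set.inter_subset_right
  obtain ⟨u₀, ⟨hu₀S, hu₀1⟩, hmax⟩ := hKc.exists_isMaxOn hK hf.continuousOn
  rw [mem_sphere_zero_iff_norm] at hu₀1
  refine ⟨f u₀, ?_, fun u hu hu1 => ?_⟩
  · obtain ⟨k, hk⟩ := exists_norm_starProjection_lt_norm_of_iInf_eq_bot hint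
      (norm_ne_zero_iff.mp (hu₀1 ▸ one_ne_zero))
    have hkj : k ≠ j := by
      rintro rfl
      exact hk.ne (norm_starProjection_apply _ hu₀S)
    exact (inf'_le _ (mem_erase.mpr ⟨hkj, mem_univ k⟩)).trans_lt (hu₀1 ▸ hk)
  · obtain ⟨k, hk, hfk⟩ := exists_mem_eq_inf' hF fun k => ‖(S k).starProjection u‖
    exact ⟨k, ne_of_mem_erase hk, hfk ▸ hmax ⟨hu, mem_sphere_zero_iff_norm.mpr hu1⟩⟩

theorem exists_lt_one_forall_exists_ne_norm_starProjection_le_mul_norm [FiniteDimensional 𝕜 E]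
    [Fintype ι] [Nontrivial ι] (hint : ⨅ i, S i = ⊥) :
    ∃ c < 1, ∀ j, ∀ v ∈ S j, ∃ k ≠ j, ‖(S k).starProjection v‖ ≤ c * ‖v‖ := by
  choose c hc1 hc using exists_lt_one_forall_norm_eq_one_exists_ne_norm_starProjection_le hint
  obtain ⟨j₀, hj₀⟩ := Finite.exists_max c
  refine ⟨c j₀, hc1 j₀, fun j v hv => ?_⟩
  obtain ⟨k, hk, hle⟩ := exists_ne_norm_starProjection_le_mul_norm (hc j) v hv
  exact ⟨k, hk, hle.trans (mul_le_mul_of_nonneg_right (hj₀ j) (norm_nonneg v))⟩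

end Family

/-- If `S₁, …, S_N` are nontrivial subspaces of `ℂ^d` with trivial intersection, then there is
`δ > 0` such that for every `j` and every `v ∈ S_j` there exists `k ≠ j` with
`|(v,w)| ≤ (1-δ)‖v‖‖w‖` for all `w ∈ S_k`. -/
theorem stmt9 {d N : ℕ} (S : Fin N → Submodule ℂ (EuclideanSpace ℂ (Fin d)))
    (hne : ∀ j, S j ≠ ⊥) (hint : (⨅ j, S j) = ⊥) :
    ∃ δ > (0 : ℝ), ∀ j, ∀ v ∈ S j, ∃ k, k ≠ j ∧ ∀ w ∈ S k,
      ‖(inner ℂ v w : ℂ)‖ ≤ (1 - δ) * ‖v‖ * ‖w‖ := by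
  rcases isEmpty_or_nonempty (Fin N) with _ | _
  · exact ⟨1, one_pos, fun j => isEmptyElim j⟩
  have := nontrivial_of_iInf_eq_bot hne hint
  obtain ⟨c, hc1, hc⟩ := exists_lt_one_forall_exists_ne_norm_starProjection_le_mul_norm hint
  refine ⟨1 - c, by linarith, fun j v hv => ?_⟩
  obtain ⟨k, hkj, hk⟩ := hc j v hv
  refine ⟨k, hkj, fun w hw => ?_⟩
  calc ‖(inner ℂ v w : ℂ)‖ ≤ ‖(S k).starProjection v‖ * ‖w‖ :=
        (S k).norm_inner_le_norm_starProjection_mul_norm v hw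
    _ ≤ (1 - (1 - c)) * ‖v‖ * ‖w‖ := by rw [sub_sub_cancel]; gcongr
end

section
/- Let Q ⊆ ℝ^n be a cube partitioned (up to null sets) into measurable sets A_1, …, A_N with |A_j| ≥ η|Q| for all j, where η > 0. Let S : Q → {subspaces of ℂ^d} with S ≡ S_j on A_j for fixed nontrivial subspaces S_j, and let δ > 0 be such that for every j and every unit v ∈ S_j there is k ≠ j with |(v,w)| ≤ (1−δ) for all unit w ∈ S_k. Then for every measurable u : Q → ℂ^d with |u(x)| = 1 and u(x) ∈ S(x) a.e., one has |∫_Q u|² ≤ (1 − δη)|Q|². -/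
/-!
Writing `I = ∫_Q u`, we have `‖I‖² = ∫_Q Re ⟪u x, I⟫ dx`, so it suffices to bound the integrand
pointwise. For a.e. `x`, `u x` is a unit vector of some `S_j`, hence there is a piece `A_k` on which
`|⟪u x, u y⟫| ≤ 1 - δ`; bounding the inner product by `1` off `A_k` gives
`Re ⟪u x, I⟫ ≤ |Q| - δ |A_k| ≤ (1 - δη) |Q|`.
-/

open MeasureTheory

open Set RCLike

section UnitSection

variable {α 𝕜 E : Type*} [MeasurableSpace α] {μ : Measure α} [RCLike 𝕜]
  [NormedAddCommGroup E] [InnerProductSpace 𝕜 E] [NormedSpace ℝ E] [CompleteSpace E]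

local notation "⟪" x ", " y "⟫" => inner 𝕜 x y

theorem setIntegral_le_measureReal_mul {f : α → ℝ} {s : Set α} [IsFiniteMeasure μ] {c : ℝ}
    (hf : IntegrableOn f s μ) (hfc : ∀ᵐ x ∂μ.restrict s, f x ≤ c) :
    ∫ x in s, f x ∂μ ≤ c * μ.real s := by
  calc ∫ x in s, f x ∂μ ≤ ∫ _ in s, c ∂μ := integral_mono_ae hf (integrable_const c) hfc
    _ = c * μ.real s := by rw [setIntegral_const, smul_eq_mul, mul_comm]

theorem norm_integral_sq_eq_integral_re_inner {u : α → E} (hu : Integrable u μ) :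
    ‖∫ x, u x ∂μ‖ ^ 2 = ∫ x, re ⟪u x, ∫ y, u y ∂μ⟫ ∂μ := by
  set I := ∫ y, u y ∂μ
  calc ‖I‖ ^ 2 = re ⟪I, ∫ y, u y ∂μ⟫ := (inner_self_eq_norm_sq I).symm
    _ = ∫ x, re ⟪I, u x⟫ ∂μ := by rw [← integral_inner hu, integral_re (hu.const_inner I)]
    _ = ∫ x, re ⟪u x, I⟫ ∂μ := by simp only [inner_re_symm I]

theorem re_inner_integral_le [IsFiniteMeasure μ] {u : α → E} (hu : Integrable u μ)
    (hu1 : ∀ᵐ y ∂μ, ‖u y‖ ≤ 1) {v : E} (hv : ‖v‖ ≤ 1) {B : Set α} (hB : MeasurableSet B)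
    {c : ℝ} (hc : ∀ᵐ y ∂μ.restrict B, ‖⟪v, u y⟫‖ ≤ c) :
    re ⟪v, ∫ y, u y ∂μ⟫ ≤ μ.real univ - (1 - c) * μ.real B := by
  have hint : Integrable (fun y => re ⟪v, u y⟫) μ := (hu.const_inner v).re
  have hB_le : ∫ y in B, re ⟪v, u y⟫ ∂μ ≤ c * μ.real B :=
    setIntegral_le_measureReal_mul hint.integrableOn
      (hc.mono fun y hy => (re_le_norm _).trans hy)
  have hBc_le : ∫ y in Bᶜ, re ⟪v, u y⟫ ∂μ ≤ 1 * μ.real Bᶜ := by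
    refine setIntegral_le_measureReal_mul hint.integrableOn (ae_restrict_of_ae ?_)
    filter_upwards [hu1] with y hy
    calc re ⟪v, u y⟫ ≤ ‖v‖ * ‖u y‖ := (re_le_norm _).trans (norm_inner_le_norm _ _)
      _ ≤ 1 := mul_le_one₀ hv (norm_nonneg _) hy
  rw [measureReal_compl hB] at hBc_le
  rw [← integral_inner hu, ← integral_re (hu.const_inner v), ← integral_add_compl hB hint]
  linarith

theorem norm_integral_sq_le_of_transversal {ι : Type*} [Countable ι] [IsFiniteMeasure μ]
    {A : ι → Set α} (hAm : ∀ j, MeasurableSet (A j)) (hcover : ∀ᵐ x ∂μ, ∃ j, x ∈ A j)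
    {η : ℝ} (hAsize : ∀ j, η * μ.real univ ≤ μ.real (A j))
    {S : ι → Set E} {δ : ℝ} (hδ : 0 ≤ δ)
    (hang : ∀ j, ∀ v ∈ S j, ‖v‖ = 1 → ∃ k, ∀ w ∈ S k, ‖w‖ = 1 → ‖⟪v, w⟫‖ ≤ 1 - δ)
    {u : α → E} (hu : AEStronglyMeasurable u μ) (hunorm : ∀ᵐ x ∂μ, ‖u x‖ = 1)
    (husec : ∀ j, ∀ᵐ x ∂μ, x ∈ A j → u x ∈ S j) :
    ‖∫ x, u x ∂μ‖ ^ 2 ≤ (1 - δ * η) * μ.real univ ^ 2 := by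
  have hu1 : ∀ᵐ x ∂μ, ‖u x‖ ≤ 1 := hunorm.mono fun x hx => hx.le
  have huint : Integrable u μ := Integrable.of_bound hu 1 hu1
  have hpoint : ∀ᵐ x ∂μ, re ⟪u x, ∫ y, u y ∂μ⟫ ≤ (1 - δ * η) * μ.real univ := by
    filter_upwards [hcover, ae_all_iff.2 husec, hunorm] with x ⟨j, hxj⟩ hxS hx1
    obtain ⟨k, hk⟩ := hang j (u x) (hxS j hxj) hx1
    have hAk : ∀ᵐ y ∂μ.restrict (A k), ‖⟪u x, u y⟫‖ ≤ 1 - δ := by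
      filter_upwards [ae_restrict_mem (hAm k), ae_restrict_of_ae (husec k),
        ae_restrict_of_ae hunorm] with y hyA hyS hy1 using hk (u y) (hyS hyA) hy1
    have hre := re_inner_integral_le huint hu1 hx1.le (hAm k) hAk
    have hδA := mul_le_mul_of_nonneg_left (hAsize k) hδ
    linarith
  calc ‖∫ x, u x ∂μ‖ ^ 2 = ∫ x, re ⟪u x, ∫ y, u y ∂μ⟫ ∂μ :=
        norm_integral_sq_eq_integral_re_inner huint
    _ ≤ ∫ _, (1 - δ * η) * μ.real univ ∂μ :=
        integral_mono_ae ((huint.inner_const _).re) (integrable_const _) hpoint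
    _ = (1 - δ * η) * μ.real univ ^ 2 := by rw [integral_const, smul_eq_mul]; ring

end UnitSection

theorem stmt10_general {n d N : ℕ} (a : Fin n → ℝ) (ℓ : ℝ)
    (Q : Set (Fin n → ℝ)) (hQ : Q = cube a ℓ)
    (A : Fin N → Set (Fin n → ℝ)) (hAQ : ∀ j, A j ⊆ Q)
    (hAm : ∀ j, MeasurableSet (A j))
    (hcover : volume (Q \ ⋃ j, A j) = 0)
    (η : ℝ)
    (hAsize : ∀ j, η * (volume Q).toReal ≤ (volume (A j)).toReal)
    (S : Fin N → Submodule ℂ (EuclideanSpace ℂ (Fin d)))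
    (δ : ℝ) (hδ : 0 < δ)
    (hang : ∀ j, ∀ v ∈ S j, ‖v‖ = 1 → ∃ k, k ≠ j ∧ ∀ w ∈ S k, ‖w‖ = 1 →
      ‖(inner ℂ v w : ℂ)‖ ≤ 1 - δ)
    (u : (Fin n → ℝ) → EuclideanSpace ℂ (Fin d))
    (hu : AEStronglyMeasurable u (volume.restrict Q))
    (hunorm : ∀ᵐ x ∂volume.restrict Q, ‖u x‖ = 1)
    (husec : ∀ j, ∀ᵐ x ∂volume.restrict (A j), u x ∈ S j) :
    ‖∫ x in Q, u x‖ ^ 2 ≤ (1 - δ * η) * (volume Q).toReal ^ 2 := by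
  have hQm : MeasurableSet Q := hQ ▸ measurableSet_Icc
  have hQc : IsCompact Q := hQ ▸ isCompact_Icc
  have : IsFiniteMeasure (volume.restrict Q) := isFiniteMeasure_restrict.2 hQc.measure_lt_top.ne
  have hcover' : ∀ᵐ x ∂volume.restrict Q, ∃ j, x ∈ A j := by
    filter_upwards [ae_restrict_mem hQm, ae_restrict_of_ae (measure_eq_zero_iff_ae_notMem.1 hcover)]
      with x hxQ hx
    simpa [hxQ] using hx
  have hAsize' : ∀ j, η * (volume.restrict Q).real univ ≤ (volume.restrict Q).real (A j) := by
    intro j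
    rw [measureReal_restrict_apply_univ, measureReal_restrict_apply (hAm j),
      inter_eq_left.2 (hAQ j)]
    exact hAsize j
  have husec' : ∀ j, ∀ᵐ x ∂volume.restrict Q, x ∈ A j → u x ∈ S j := fun j =>
    ae_restrict_of_ae ((ae_restrict_iff' (hAm j)).1 (husec j))
  have := norm_integral_sq_le_of_transversal hAm hcover' hAsize' hδ.le
    (fun j v hv hv1 => (hang j v hv hv1).imp fun _ hk => hk.2) hu hunorm husec'
  rwa [measureReal_restrict_apply_univ] at this

/-- Quantitative lower bound on the oscillation: if a cube `Q` is partitioned (up to null sets)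
into sets `A_j` of measure `≥ η|Q|`, on each of which a subspace field `S` is constantly equal
to a subspace `S_j`, and the subspaces satisfy the quantitative transversality condition with
constant `δ`, then every unit section `u` of `S` satisfies `‖∫_Q u‖² ≤ (1 - δη)|Q|²`. -/
theorem stmt10 {n d N : ℕ} (a : Fin n → ℝ) (ℓ : ℝ) (hℓ : 0 < ℓ)
    (Q : Set (Fin n → ℝ)) (hQ : Q = cube a ℓ)
    (A : Fin N → Set (Fin n → ℝ)) (hAQ : ∀ j, A j ⊆ Q)
    (hAm : ∀ j, MeasurableSet (A j))
    (hdisj : ∀ j k, j ≠ k → volume (A j ∩ A k) = 0)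
    (hcover : volume (Q \ ⋃ j, A j) = 0)
    (η : ℝ) (hη : 0 < η)
    (hAsize : ∀ j, η * (volume Q).toReal ≤ (volume (A j)).toReal)
    (S : Fin N → Submodule ℂ (EuclideanSpace ℂ (Fin d)))
    (hSne : ∀ j, S j ≠ ⊥)
    (δ : ℝ) (hδ : 0 < δ)
    (hang : ∀ j, ∀ v ∈ S j, ‖v‖ = 1 → ∃ k, k ≠ j ∧ ∀ w ∈ S k, ‖w‖ = 1 →
      ‖(inner ℂ v w : ℂ)‖ ≤ 1 - δ)
    (u : (Fin n → ℝ) → EuclideanSpace ℂ (Fin d))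
    (hu : AEStronglyMeasurable u (volume.restrict Q))
    (hunorm : ∀ᵐ x ∂volume.restrict Q, ‖u x‖ = 1)
    (husec : ∀ j, ∀ᵐ x ∂volume.restrict (A j), u x ∈ S j) :
    ‖∫ x in Q, u x‖ ^ 2 ≤ (1 - δ * η) * (volume Q).toReal ^ 2 :=
  stmt10_general a ℓ Q hQ A hAQ hAm hcover η hAsize S δ hδ hang u hu hunorm husec
end

section
/- For every n, D ∈ ℕ there exists c > 0 such that: for every non-zero real polynomial p in n variables of degree ≤ D and every cube Q ⊆ ℝ^n, there exists a cube Q' ⊆ Q with side length c·ℓ_Q such that p has no zeros in Q'. -/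
/-!
Restricted to the unit cube, the polynomials of degree `≤ D` form a finite-dimensional space `V`
of continuous functions. Having a zero-free subcube of side `c` is an open condition on
`f ∈ C([0,1]ⁿ, ℝ)`, monotone in `c`, and every non-zero `f` satisfies it for some `c > 0`.
Compactness of the unit sphere of `V` then yields one `c` for the whole sphere, and hence, by
scaling, for all of `V ∖ {0}`. An affine change of variables carries any cube to the unit cube
without raising the degree.
-/

open MvPolynomial Set

abbrev unitCube (n : ℕ) : Set (Fin n → ℝ) := cube 0 1

section Cube

variable {n : ℕ}

lemma mem_cube {a x : Fin n → ℝ} {ℓ : ℝ} :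
    x ∈ cube a ℓ ↔ ∀ i, a i ≤ x i ∧ x i ≤ a i + ℓ := by
  simp only [cube, mem_Icc, Pi.le_def, Pi.add_apply, forall_and]

lemma cube_subset_cube {a : Fin n → ℝ} {ℓ ℓ' : ℝ} (h : ℓ ≤ ℓ') : cube a ℓ ⊆ cube a ℓ' :=
  Icc_subset_Icc_right (add_le_add_right (fun _ => h) a)

instance (a : Fin n → ℝ) (ℓ : ℝ) : CompactSpace (cube a ℓ) :=
  isCompact_iff_compactSpace.mp isCompact_Icc

lemma image_affine_cube {ℓ : ℝ} (hℓ : 0 < ℓ) (a b : Fin n → ℝ) (c : ℝ) :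
    (fun y => a + ℓ • y) '' cube b c = cube (a + ℓ • b) (c * ℓ) := by
  ext x
  constructor
  · rintro ⟨y, hy, rfl⟩
    rw [mem_cube] at hy ⊢
    intro i
    simp only [Pi.add_apply, Pi.smul_apply, smul_eq_mul]
    constructor <;> nlinarith [hy i]
  · intro hx
    refine ⟨ℓ⁻¹ • (x - a), ?_, by simp [smul_smul, hℓ.ne']⟩
    rw [mem_cube] at hx ⊢
    intro i
    simp only [Pi.smul_apply, Pi.sub_apply, smul_eq_mul, Pi.add_apply] at hx ⊢
    rw [inv_mul_eq_div, le_div_iff₀ hℓ, div_le_iff₀ hℓ]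
    constructor <;> linarith [hx i]

lemma exists_cube_subset_ball {x : Fin n → ℝ} (hx : x ∈ unitCube n) {δ : ℝ} (hδ : 0 < δ) :
    ∃ a, ∃ c > 0, cube a c ⊆ unitCube n ∧ cube a c ⊆ Metric.ball x δ := by
  set c := min (δ / 2) 1
  have hc : 0 < c := by positivity
  have hcδ : c < δ := (min_le_left _ _).trans_lt (half_lt_self hδ)
  have hc1 : c ≤ 1 := min_le_right _ _
  rw [mem_cube] at hx
  -- the corner `min (x i) (1 - c)` keeps the cube inside the unit cube and still containing `x`
  refine ⟨fun i => min (x i) (1 - c), c, hc, fun y hy => ?_, fun y hy => ?_⟩ <;>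
    rw [mem_cube] at hy
  · rw [mem_cube]
    intro i
    have := hy i
    simp only [Pi.zero_apply, zero_add] at hx ⊢
    constructor <;> linarith [min_le_right (x i) (1 - c), le_min (hx i).1 (sub_nonneg.2 hc1)]
  · rw [Metric.mem_ball, dist_pi_lt_iff hδ]
    intro i
    rw [Real.dist_eq, abs_lt]
    simp only [Pi.zero_apply, zero_add] at hx
    have := hy i
    have : x i - c ≤ min (x i) (1 - c) := le_min (by linarith) (by linarith [(hx i).2])
    constructor <;> linarith [min_le_left (x i) (1 - c)]

end Cube

section ZeroFree

variable {n : ℕ}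

def HasZeroFreeSubcube (c : ℝ) (f : C(unitCube n, ℝ)) : Prop :=
  ∃ a, cube a c ⊆ unitCube n ∧ ∀ x : unitCube n, (x : Fin n → ℝ) ∈ cube a c → f x ≠ 0

lemma HasZeroFreeSubcube.mono {c c' : ℝ} {f : C(unitCube n, ℝ)} (hf : HasZeroFreeSubcube c f)
    (h : c' ≤ c) : HasZeroFreeSubcube c' f :=
  let ⟨a, ha, hfa⟩ := hf
  ⟨a, (cube_subset_cube h).trans ha, fun x hx => hfa x (cube_subset_cube h hx)⟩

lemma HasZeroFreeSubcube.smul {c r : ℝ} {f : C(unitCube n, ℝ)} (hf : HasZeroFreeSubcube c f)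
    (hr : r ≠ 0) : HasZeroFreeSubcube c (r • f) :=
  let ⟨a, ha, hfa⟩ := hf
  ⟨a, ha, fun x hx => smul_ne_zero hr (hfa x hx)⟩

lemma isOpen_setOf_hasZeroFreeSubcube (c : ℝ) :
    IsOpen {f : C(unitCube n, ℝ) | HasZeroFreeSubcube c f} := by
  have hK (a : Fin n → ℝ) : IsCompact (Subtype.val ⁻¹' cube a c : Set (unitCube n)) :=
    (isClosed_Icc.preimage continuous_subtype_val).isCompact
  simp only [HasZeroFreeSubcube, ofPred_exists]
  exact isOpen_iUnion fun a => isOpen_const.inter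
    (ContinuousMap.isOpen_setOfPred_mapsTo (hK a) isClosed_singleton.isOpen_compl)

lemma exists_hasZeroFreeSubcube {f : C(unitCube n, ℝ)} (hf : f ≠ 0) :
    ∃ c > 0, HasZeroFreeSubcube c f := by
  obtain ⟨x, hx⟩ := DFunLike.ne_iff.1 hf
  obtain ⟨δ, hδ, hball⟩ := Metric.isOpen_iff.1
    (isClosed_singleton.isOpen_compl.preimage f.continuous) x hx
  obtain ⟨a, c, hc, hcube, hcball⟩ := exists_cube_subset_ball x.2 hδ
  exact ⟨c, hc, a, hcube, fun y hy => hball (hcball hy)⟩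

lemma exists_forall_hasZeroFreeSubcube (V : Submodule ℝ C(unitCube n, ℝ))
    [FiniteDimensional ℝ V] : ∃ c > 0, ∀ f ∈ V, f ≠ 0 → HasZeroFreeSubcube c f := by
  let U (k : ℕ) : Set V := {g | HasZeroFreeSubcube (1 / (k + 1)) (g : C(unitCube n, ℝ))}
  have hU_open (k : ℕ) : IsOpen (U k) :=
    (isOpen_setOf_hasZeroFreeSubcube _).preimage continuous_subtype_val
  have hU_mono : Monotone U := fun k m hkm g hg =>
    hg.mono (Nat.one_div_le_one_div hkm)
  have hU_cover : Metric.sphere (0 : V) 1 ⊆ ⋃ k, U k := by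
    intro g hg
    have hg0 : (g : C(unitCube n, ℝ)) ≠ 0 := by
      rw [Ne, ZeroMemClass.coe_eq_zero]; exact ne_zero_of_mem_sphere one_ne_zero ⟨g, hg⟩
    obtain ⟨c, hc, hgc⟩ := exists_hasZeroFreeSubcube hg0
    obtain ⟨k, hk⟩ := exists_nat_one_div_lt hc
    exact mem_iUnion.2 ⟨k, hgc.mono hk.le⟩
  obtain ⟨k, hk⟩ := (isCompact_sphere (0 : V) 1).elim_directed_cover U hU_open hU_cover
    hU_mono.directed_le
  refine ⟨1 / (k + 1), Nat.one_div_pos_of_nat, fun f hfV hf => ?_⟩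
  set g : V := ⟨f, hfV⟩
  have hg : g ≠ 0 := by simpa [g] using hf
  have := (hk (mem_sphere_zero_iff_norm.2 (norm_smul_inv_norm (𝕜 := ℝ) hg))).smul
    (norm_ne_zero_iff.2 hg)
  simpa [g, smul_smul, hf] using this

end ZeroFree

namespace MvPolynomial

lemma totalDegree_bind₁_le {σ τ R : Type*} [CommSemiring R] {g : σ → MvPolynomial τ R}
    (hg : ∀ i, (g i).totalDegree ≤ 1) (p : MvPolynomial σ R) :
    (bind₁ g p).totalDegree ≤ p.totalDegree := by
  rw [bind₁, aeval_def, eval₂_eq]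
  refine totalDegree_finsetSum_le fun d hd => ?_
  calc (algebraMap R _ (coeff d p) * ∏ i ∈ d.support, g i ^ d i).totalDegree
      ≤ ∑ i ∈ d.support, (g i ^ d i).totalDegree := by
        refine (totalDegree_mul _ _).trans ?_
        rw [algebraMap_eq, totalDegree_C, zero_add]
        exact totalDegree_finsetProd _ _
    _ ≤ ∑ i ∈ d.support, d i := by
        gcongr with i
        exact (totalDegree_pow _ _).trans (by simpa using Nat.mul_le_mul_left (d i) (hg i))
    _ ≤ p.totalDegree := le_totalDegree hd

lemma totalDegree_C_add_C_mul_X_le {σ R : Type*} [CommSemiring R] (a b : R) (i : σ) :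
    (C a + C b * X i : MvPolynomial σ R).totalDegree ≤ 1 := by
  refine (totalDegree_add _ _).trans (max_le ?_ ((totalDegree_mul _ _).trans ?_))
  · rw [totalDegree_C]; exact zero_le_one
  · rw [totalDegree_C, zero_add]
    exact (totalDegree_monomial_le _ _).trans (by simp)

lemma eval_bind₁_C_add_C_mul_X {σ R : Type*} [CommSemiring R] (a y : σ → R) (ℓ : R)
    (p : MvPolynomial σ R) :
    eval y (bind₁ (fun i => C (a i) + C ℓ * X i) p) = eval (a + ℓ • y) p := by
  change eval₂Hom (RingHom.id R) y _ = _
  rw [eval₂Hom_bind₁]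
  congr 2 with i
  simp

lemma bind₁_C_add_C_mul_X_ne_zero {σ R : Type*} [Field R] [Infinite R] {p : MvPolynomial σ R}
    (hp : p ≠ 0) (a : σ → R) {ℓ : R} (hℓ : ℓ ≠ 0) :
    bind₁ (fun i => C (a i) + C ℓ * X i) p ≠ 0 := by
  refine fun h => hp (MvPolynomial.funext fun x => ?_)
  have := congrArg (eval (ℓ⁻¹ • (x - a))) h
  rwa [eval_bind₁_C_add_C_mul_X, smul_smul, mul_inv_cancel₀ hℓ, one_smul, add_sub_cancel,
    map_zero] at this

end MvPolynomial

noncomputable def evalOnUnitCube (n : ℕ) : MvPolynomial (Fin n) ℝ →ₗ[ℝ] C(unitCube n, ℝ) where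
  toFun p := ⟨fun x => eval (x : Fin n → ℝ) p, (continuous_eval p).comp continuous_subtype_val⟩
  map_add' p q := by ext; simp
  map_smul' r p := by ext; simp

lemma evalOnUnitCube_injective (n : ℕ) : Function.Injective (evalOnUnitCube n) := by
  refine (injective_iff_map_eq_zero _).2 fun p hp => ?_
  refine funext_set (fun _ => Icc 0 1) (fun _ => Icc_infinite zero_lt_one) fun x hx => ?_
  have hx' : x ∈ unitCube n := mem_cube.2 fun i => by simpa using hx i (mem_univ i)
  simpa [evalOnUnitCube] using DFunLike.congr_fun hp ⟨x, hx'⟩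

/-- For every `n, D` there is `c > 0` such that every non-zero real polynomial in `n` variables
of degree `≤ D` has a zero-free sub-cube of relative side `c` inside every cube. -/
theorem stmt11 (n D : ℕ) :
    ∃ c > (0 : ℝ), ∀ p : MvPolynomial (Fin n) ℝ, p ≠ 0 → p.totalDegree ≤ D →
      ∀ (a : Fin n → ℝ) (ℓ : ℝ), 0 < ℓ →
        ∃ a' : Fin n → ℝ, cube a' (c * ℓ) ⊆ cube a ℓ ∧
          ∀ x ∈ cube a' (c * ℓ), MvPolynomial.eval x p ≠ 0 := by
  obtain ⟨c, hc, hV⟩ := exists_forall_hasZeroFreeSubcube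
    ((restrictTotalDegree (Fin n) ℝ D).map (evalOnUnitCube n))
  refine ⟨c, hc, fun p hp hpD a ℓ hℓ => ?_⟩
  have hqD : bind₁ (fun i => C (a i) + C ℓ * X i) p ∈ restrictTotalDegree (Fin n) ℝ D :=
    (mem_restrictTotalDegree _ _ _).2
      ((totalDegree_bind₁_le (fun i => totalDegree_C_add_C_mul_X_le _ _ i) p).trans hpD)
  obtain ⟨b, hb, hqb⟩ := hV _ (Submodule.mem_map_of_mem hqD)
    ((map_ne_zero_iff _ (evalOnUnitCube_injective n)).2 (bind₁_C_add_C_mul_X_ne_zero hp a hℓ.ne'))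
  have hsub := image_mono (f := fun y => a + ℓ • y) hb
  rw [image_affine_cube hℓ, image_affine_cube hℓ, smul_zero, add_zero, one_mul] at hsub
  refine ⟨a + ℓ • b, hsub, ?_⟩
  rw [← image_affine_cube hℓ]
  rintro _ ⟨y, hy, rfl⟩
  simpa [evalOnUnitCube, eval_bind₁_C_add_C_mul_X] using hqb ⟨y, hb hy⟩ hy
end

section
/- Let V : ℝ → H_2^{≥0} be given by V(x) = [[x⁴, x⁵],[x⁵, x⁶]]. Then the determinant of ∫_{x−ℓ/2}^{x+ℓ/2} V(y) dy equals (ℓ⁴ x⁸)/12 plus terms of lower degree in x, and its trace equals ℓ x⁶ plus lower-degree terms; consequently, for every ℓ > 0 the minimal eigenvalue of ∫_{x−ℓ/2}^{x+ℓ/2} V(y) dy tends to +∞ as |x| → ∞. -/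
/-!
The entries of the window matrix are moments of `[x - ℓ/2, x + ℓ/2]`, so its determinant and
trace are even polynomials in `x`, i.e. polynomials in `u = x²`, of degrees 4 and 3 with leading
coefficients `ℓ⁴/12` and `ℓ` (the determinant is the Gram determinant
`½ ∬ y⁴z⁴(y - z)² dy dz ≈ x⁸ · ½ ∬ (y - z)² dy dz`). Each eigenvalue `λ` of a Hermitian
`2 × 2` matrix is a root of `λ² - tr·λ + det`, so `λ·tr = λ² + det ≥ det` and `λ ≥ det/tr` once
`tr > 0`; and `det/tr ~ ℓ³x²/12 → ∞`.
-/

open MeasureTheory Filter Polynomial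

lemma integral_Icc_pow {a b : ℝ} (hab : a ≤ b) (n : ℕ) :
    ∫ y in Set.Icc a b, y ^ n = (b ^ (n + 1) - a ^ (n + 1)) / (n + 1) := by
  rw [integral_Icc_eq_integral_Ioc, ← intervalIntegral.integral_of_le hab, integral_pow]

namespace Matrix.IsHermitian

variable {𝕜 : Type*} [RCLike 𝕜] {A : Matrix (Fin 2) (Fin 2) 𝕜}

lemma eigenvalues_mul_re_trace (hA : A.IsHermitian) (i : Fin 2) :
    hA.eigenvalues i * RCLike.re A.trace = hA.eigenvalues i ^ 2 + RCLike.re A.det := by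
  rw [hA.trace_eq_sum_eigenvalues, hA.det_eq_prod_eigenvalues, Fin.sum_univ_two,
    Fin.prod_univ_two]
  simp only [map_add, ← RCLike.ofReal_mul, RCLike.ofReal_re]
  fin_cases i <;> simp only [Fin.zero_eta, Fin.mk_one] <;> ring

lemma re_det_div_re_trace_le_iInf_eigenvalues (hA : A.IsHermitian)
    (htr : 0 < RCLike.re A.trace) :
    RCLike.re A.det / RCLike.re A.trace ≤ ⨅ i, hA.eigenvalues i :=
  le_ciInf fun i => by
    rw [div_le_iff₀ htr, hA.eigenvalues_mul_re_trace]
    nlinarith [sq_nonneg (hA.eigenvalues i)]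

end Matrix.IsHermitian

lemma Polynomial.exists_degree_lt_eval_sq_eq {R : Type*} [CommRing R] [IsDomain R] (P : R[X]) :
    ∃ r : R[X], r.degree < ↑(2 * P.natDegree) ∧
      ∀ x, P.eval (x ^ 2) = P.leadingCoeff * x ^ (2 * P.natDegree) + r.eval x := by
  set p := P.comp (X ^ 2)
  have hdeg : p.natDegree = 2 * P.natDegree := by
    rw [natDegree_comp, natDegree_X_pow, mul_comm]
  have hlc : p.leadingCoeff = P.leadingCoeff := by
    rw [leadingCoeff_comp (by simp), leadingCoeff_X_pow, one_pow, mul_one]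
  refine ⟨p.eraseLead, ?_, fun x => ?_⟩
  · rcases eq_or_ne p 0 with hp | hp
    · rw [hp, eraseLead_zero, degree_zero]
      exact WithBot.bot_lt_coe _
    · exact hdeg ▸ degree_eq_natDegree hp ▸ degree_eraseLead_lt hp
  · have hp : P.eval (x ^ 2) = p.eval x := by simp [p, eval_comp]
    rw [hp, ← hdeg, ← hlc, add_comm]
    conv_lhs => rw [← p.eraseLead_add_C_mul_X_pow]
    simp only [eval_add, eval_mul, eval_C, eval_pow, eval_X]

lemma tendsto_sq_cocompact_atTop : Tendsto (fun x : ℝ => x ^ 2) (cocompact ℝ) atTop :=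
  ((tendsto_pow_atTop two_ne_zero).comp tendsto_norm_cocompact_atTop).congr fun x => by
    simp [Real.norm_eq_abs, sq_abs]

noncomputable def windowMatrix (ℓ x : ℝ) : Matrix (Fin 2) (Fin 2) ℝ :=
  !![∫ y in Set.Icc (x - ℓ / 2) (x + ℓ / 2), y ^ 4,
       ∫ y in Set.Icc (x - ℓ / 2) (x + ℓ / 2), y ^ 5;
     ∫ y in Set.Icc (x - ℓ / 2) (x + ℓ / 2), y ^ 5,
       ∫ y in Set.Icc (x - ℓ / 2) (x + ℓ / 2), y ^ 6]

noncomputable def windowDetPoly (ℓ : ℝ) : ℝ[X] :=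
  C (ℓ ^ 4 / 12) * X ^ 4 + C (ℓ ^ 6 / 180) * X ^ 3 + C (5 * ℓ ^ 8 / 672) * X ^ 2
    - C (ℓ ^ 10 / 2240) * X + C (ℓ ^ 12 / 35840)

noncomputable def windowTracePoly (ℓ : ℝ) : ℝ[X] :=
  C ℓ * X ^ 3 + C (ℓ + 5 * ℓ ^ 3 / 4) * X ^ 2 + C (ℓ ^ 3 / 2 + 3 * ℓ ^ 5 / 16) * X
    + C (ℓ ^ 5 / 80 + ℓ ^ 7 / 448)

section window

variable {ℓ : ℝ}

lemma windowMatrix_det (hℓ : 0 ≤ ℓ) (x : ℝ) :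
    (windowMatrix ℓ x).det = (windowDetPoly ℓ).eval (x ^ 2) := by
  have hab : x - ℓ / 2 ≤ x + ℓ / 2 := by linarith
  simp only [windowMatrix, Matrix.det_fin_two_of, integral_Icc_pow hab, windowDetPoly,
    eval_add, eval_sub, eval_mul, eval_C, eval_pow, eval_X]
  push_cast
  ring

lemma windowMatrix_trace (hℓ : 0 ≤ ℓ) (x : ℝ) :
    (windowMatrix ℓ x).trace = (windowTracePoly ℓ).eval (x ^ 2) := by
  have hab : x - ℓ / 2 ≤ x + ℓ / 2 := by linarith
  simp only [windowMatrix, Matrix.trace_fin_two_of, integral_Icc_pow hab, windowTracePoly,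
    eval_add, eval_mul, eval_C, eval_pow, eval_X]
  push_cast
  ring

lemma degree_windowDetPoly (hℓ : ℓ ≠ 0) : (windowDetPoly ℓ).degree = 4 := by
  unfold windowDetPoly
  compute_degree!

lemma degree_windowTracePoly (hℓ : ℓ ≠ 0) : (windowTracePoly ℓ).degree = 3 := by
  unfold windowTracePoly
  compute_degree!

lemma leadingCoeff_windowDetPoly (hℓ : ℓ ≠ 0) :
    (windowDetPoly ℓ).leadingCoeff = ℓ ^ 4 / 12 := by
  rw [leadingCoeff, natDegree_eq_of_degree_eq_some (degree_windowDetPoly hℓ), windowDetPoly]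
  simp only [coeff_add, coeff_sub, coeff_C_mul, coeff_X_pow, coeff_X, coeff_C]
  norm_num

lemma leadingCoeff_windowTracePoly (hℓ : ℓ ≠ 0) :
    (windowTracePoly ℓ).leadingCoeff = ℓ := by
  rw [leadingCoeff, natDegree_eq_of_degree_eq_some (degree_windowTracePoly hℓ), windowTracePoly]
  simp only [coeff_add, coeff_C_mul, coeff_X_pow, coeff_X, coeff_C]
  norm_num

end window

/-- For `V(x) = [[x⁴, x⁵], [x⁵, x⁶]]` and `M(x) = ∫_{x-ℓ/2}^{x+ℓ/2} V(y) dy` (entrywise):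
`det M(x) = ℓ⁴x⁸/12 +` lower order, `tr M(x) = ℓx⁶ +` lower order, and consequently the
minimal eigenvalue of `M(x)` tends to `+∞` as `|x| → ∞`, for every `ℓ > 0`. -/
theorem stmt15 (ℓ : ℝ) (hℓ : 0 < ℓ)
    (M : ℝ → Matrix (Fin 2) (Fin 2) ℝ)
    (hM : ∀ x, M x =
      !![∫ y in Set.Icc (x - ℓ / 2) (x + ℓ / 2), y ^ 4,
           ∫ y in Set.Icc (x - ℓ / 2) (x + ℓ / 2), y ^ 5;
         ∫ y in Set.Icc (x - ℓ / 2) (x + ℓ / 2), y ^ 5,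
           ∫ y in Set.Icc (x - ℓ / 2) (x + ℓ / 2), y ^ 6])
    (hH : ∀ x, (M x).IsHermitian) :
    (∃ r : Polynomial ℝ, r.degree < 8 ∧
        ∀ x, (M x).det = ℓ ^ 4 * x ^ 8 / 12 + r.eval x) ∧
      (∃ s : Polynomial ℝ, s.degree < 6 ∧
        ∀ x, (M x).trace = ℓ * x ^ 6 + s.eval x) ∧
      Tendsto (fun x => ⨅ i, (hH x).eigenvalues i) (cocompact ℝ) atTop := by
  obtain rfl : M = windowMatrix ℓ := funext hM
  have hdet := degree_windowDetPoly hℓ.ne'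
  have htr := degree_windowTracePoly hℓ.ne'
  refine ⟨?_, ?_, ?_⟩
  · obtain ⟨r, hr, hrx⟩ := (windowDetPoly ℓ).exists_degree_lt_eval_sq_eq
    rw [natDegree_eq_of_degree_eq_some hdet] at hr hrx
    refine ⟨r, hr, fun x => ?_⟩
    rw [windowMatrix_det hℓ.le, hrx, leadingCoeff_windowDetPoly hℓ.ne']
    ring
  · obtain ⟨s, hs, hsx⟩ := (windowTracePoly ℓ).exists_degree_lt_eval_sq_eq
    rw [natDegree_eq_of_degree_eq_some htr] at hs hsx
    refine ⟨s, hs, fun x => ?_⟩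
    rw [windowMatrix_trace hℓ.le, hsx, leadingCoeff_windowTracePoly hℓ.ne']
  · have hratio := ((windowDetPoly ℓ).div_tendsto_atTop_of_degree_gt' (windowTracePoly ℓ)
      (by rw [hdet, htr]; norm_num) (by
        rw [leadingCoeff_windowDetPoly hℓ.ne', leadingCoeff_windowTracePoly hℓ.ne']
        positivity)).comp tendsto_sq_cocompact_atTop
    have htr_pos := (((windowTracePoly ℓ).tendsto_atTop_of_leadingCoeff_nonneg
      (by rw [htr]; norm_num) (by rw [leadingCoeff_windowTracePoly hℓ.ne']; positivity)).comp
      tendsto_sq_cocompact_atTop).eventually_gt_atTop 0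
    refine tendsto_atTop_mono' _ ?_ hratio
    filter_upwards [htr_pos] with x hx
    have := (hH x).re_det_div_re_trace_le_iInf_eigenvalues
    simp only [RCLike.re_to_real, windowMatrix_det hℓ.le, windowMatrix_trace hℓ.le] at this
    exact this hx
end
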